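/- arXiv:2006.08161 — 2 statements merged into one kernel-verified Lean document; each statement's English description precedes it below -/
import Mathlib

section
/- (Proposition 2, weighted version.) Let D : Fin C → Fin C → ℝ≥0 satisfy cyclical monotonicity (∑_j D(j,j) ≤ ∑_j D(j,σ(j)) for all permutations σ), and let a : Fin C → ℝ with a_j > 0 and ∑_j a_j = 1. Then the diagonal coupling γ'(i,j) = a_i·[i=j] is optimal for the transport problem with both marginals equal to a: for every coupling Γ (Γ(i,j) ≥ 0, ∑_j Γ(i,j) = a_i, ∑_i Γ(i,j) = a_j), we have ∑_i a_i D(i,i) ≤ ∑_{i,j} Γ(i,j) D(i,j). -/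
/-!
Adding `1 - a i` to the diagonal of a coupling `Γ` of `a` with itself gives a doubly stochastic
matrix `M`. By Birkhoff's theorem `M` is a convex combination of permutation matrices, so
cyclical monotonicity gives `∑ D i i ≤ ∑ M i j * D i j = ∑ Γ i j * D i j + ∑ (1 - a i) * D i i`,
which rearranges to the claim.
-/

open Finset Matrix

variable {R n : Type*} [Fintype n] [DecidableEq n]

lemma Equiv.Perm.sum_sum_permMatrix_mul [Semiring R] (σ : Equiv.Perm n) (D : n → n → R) :
    ∑ i, ∑ j, σ.permMatrix R i j * D i j = ∑ i, D i (σ i) := by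
  simp [Equiv.Perm.permMatrix, PEquiv.toMatrix_apply]

lemma Matrix.sum_sum_add_diagonal_mul [NonUnitalNonAssocSemiring R] (M : Matrix n n R)
    (d : n → R) (D : n → n → R) :
    ∑ i, ∑ j, (M + diagonal d) i j * D i j = ∑ i, ∑ j, M i j * D i j + ∑ i, d i * D i i := by
  simp [add_mul, Finset.sum_add_distrib, diagonal_apply]

theorem sum_diag_le_sum_sum_mul_of_mem_doublyStochastic
    [Field R] [LinearOrder R] [IsStrictOrderedRing R] {D : n → n → R}
    (hD : ∀ σ : Equiv.Perm n, ∑ i, D i i ≤ ∑ i, D i (σ i))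
    {M : Matrix n n R} (hM : M ∈ doublyStochastic R n) :
    ∑ i, D i i ≤ ∑ i, ∑ j, M i j * D i j := by
  obtain ⟨w, hw_nonneg, hw_sum, rfl⟩ := exists_eq_sum_perm_of_mem_doublyStochastic hM
  have hexpand : ∑ i, ∑ j, (∑ σ : Equiv.Perm n, w σ • σ.permMatrix R) i j * D i j
      = ∑ σ, w σ * ∑ i, D i (σ i) := by
    simp_rw [← Equiv.Perm.sum_sum_permMatrix_mul, Matrix.sum_apply, Matrix.smul_apply,
      smul_eq_mul, Finset.sum_mul, Finset.mul_sum, mul_assoc]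
    conv_rhs => rw [Finset.sum_comm]
    exact Finset.sum_congr rfl fun _ _ => Finset.sum_comm
  calc ∑ i, D i i = ∑ σ : Equiv.Perm n, w σ * ∑ i, D i i := by
        rw [← Finset.sum_mul, hw_sum, one_mul]
    _ ≤ ∑ σ, w σ * ∑ i, D i (σ i) :=
      Finset.sum_le_sum fun σ _ => mul_le_mul_of_nonneg_left (hD σ) (hw_nonneg σ)
    _ = _ := hexpand.symm

theorem add_diagonal_one_sub_mem_doublyStochastic
    [Ring R] [PartialOrder R] [IsOrderedRing R] {a : n → R} (ha : ∀ i, 0 ≤ a i)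
    (hasum : ∑ i, a i = 1) {Γ : Matrix n n R} (hΓ : ∀ i j, 0 ≤ Γ i j)
    (hrow : ∀ i, ∑ j, Γ i j = a i) (hcol : ∀ j, ∑ i, Γ i j = a j) :
    Γ + diagonal (1 - a) ∈ doublyStochastic R n := by
  have ha_le : ∀ i, a i ≤ 1 := fun i =>
    hasum ▸ Finset.single_le_sum (fun j _ => ha j) (Finset.mem_univ i)
  refine mem_doublyStochastic_iff_sum.2 ⟨fun i j => ?_, fun i => ?_, fun j => ?_⟩
  · by_cases hij : i = j
    · subst hij
      simpa using add_nonneg (hΓ i i) (sub_nonneg.2 (ha_le i))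
    · simpa [hij] using hΓ i j
  · simp [Finset.sum_add_distrib, diagonal_apply, hrow]
  · simp [Finset.sum_add_distrib, diagonal_apply, hcol]

theorem sum_mul_diag_le_sum_sum_mul_of_marginals
    [Field R] [LinearOrder R] [IsStrictOrderedRing R] {D : n → n → R}
    (hD : ∀ σ : Equiv.Perm n, ∑ i, D i i ≤ ∑ i, D i (σ i))
    {a : n → R} (ha : ∀ i, 0 ≤ a i) (hasum : ∑ i, a i = 1) {Γ : Matrix n n R}
    (hΓ : ∀ i j, 0 ≤ Γ i j) (hrow : ∀ i, ∑ j, Γ i j = a i) (hcol : ∀ j, ∑ i, Γ i j = a j) :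
    ∑ i, a i * D i i ≤ ∑ i, ∑ j, Γ i j * D i j := by
  have hbirkhoff := sum_diag_le_sum_sum_mul_of_mem_doublyStochastic hD
    (add_diagonal_one_sub_mem_doublyStochastic ha hasum hΓ hrow hcol)
  rw [Matrix.sum_sum_add_diagonal_mul] at hbirkhoff
  simp only [Pi.sub_apply, Pi.one_apply, sub_mul, one_mul, Finset.sum_sub_distrib] at hbirkhoff
  linarith

theorem stmt13_general {C : ℕ} (D : Fin C → Fin C → ℝ)
    (hcyc : ∀ σ : Equiv.Perm (Fin C), ∑ j, D j j ≤ ∑ j, D j (σ j))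
    (a : Fin C → ℝ) (ha : ∀ i, 0 < a i) (hasum : ∑ i, a i = 1)
    (Γ : Fin C → Fin C → ℝ) (hΓnn : ∀ i j, 0 ≤ Γ i j)
    (hΓrow : ∀ i, ∑ j, Γ i j = a i) (hΓcol : ∀ j, ∑ i, Γ i j = a j) :
    ∑ i, a i * D i i ≤ ∑ i, ∑ j, Γ i j * D i j :=
  sum_mul_diag_le_sum_sum_mul_of_marginals hcyc (fun i => (ha i).le) hasum hΓnn hΓrow hΓcol

/-- Proposition 2 (weighted version). If the nonnegative cost `D` is
cyclically monotone and `a` is a strictly positive probability vector, then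
the diagonal coupling `diag a` is optimal for the transport problem with both
marginals `a`: for every coupling `Γ` with marginals `a` and `a`,
`∑ i, a i * D i i ≤ ∑ i, ∑ j, Γ i j * D i j`. -/
theorem stmt13 {C : ℕ} (hC : 0 < C) (D : Fin C → Fin C → ℝ)
    (hDnn : ∀ i j, 0 ≤ D i j)
    (hcyc : ∀ σ : Equiv.Perm (Fin C), ∑ j, D j j ≤ ∑ j, D j (σ j))
    (a : Fin C → ℝ) (ha : ∀ i, 0 < a i) (hasum : ∑ i, a i = 1)
    (Γ : Fin C → Fin C → ℝ) (hΓnn : ∀ i j, 0 ≤ Γ i j)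
    (hΓrow : ∀ i, ∑ j, Γ i j = a i) (hΓcol : ∀ j, ∑ i, Γ i j = a j) :
    ∑ i, a i * D i i ≤ ∑ i, ∑ j, Γ i j * D i j :=
  stmt13_general D hcyc a ha hasum Γ hΓnn hΓrow hΓcol
end

section
/- (Discrete Kantorovich problem attains optimum at a permutation.) For any cost D : Fin C → Fin C → ℝ, the minimum of ∑_{i,j} P(i,j) D(i,j) over scaled doubly stochastic matrices P (nonnegative, row and column sums 1/C) equals (1/C)·min over permutations σ of ∑_i D(i, σ(i)). -/
open Finset Matrix

lemma perm_row_obj {C : ℕ} (D : Fin C → Fin C → ℝ) (σ : Equiv.Perm (Fin C)) (i : Fin C) :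
    ∑ j, (σ.permMatrix ℝ) i j * D i j = D i (σ i) := by
  simp [Equiv.Perm.permMatrix, PEquiv.toMatrix_apply, Equiv.toPEquiv_apply, ite_mul,
    Finset.sum_ite_eq, Finset.sum_ite_eq']

/-- The discrete Kantorovich problem attains its optimum at a permutation:
the infimum of `∑ i, ∑ j, P i j * D i j` over scaled doubly stochastic `P`
(nonnegative entries, row and column sums `1/C`) equals
`(1/C) * min_σ ∑ i, D i (σ i)`. -/
theorem stmt16 {C : ℕ} (hC : 0 < C) (D : Fin C → Fin C → ℝ) :
    sInf {x : ℝ | ∃ P : Fin C → Fin C → ℝ, (∀ i j, 0 ≤ P i j) ∧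
        (∀ i, ∑ j, P i j = 1 / C) ∧ (∀ j, ∑ i, P i j = 1 / C) ∧
        x = ∑ i, ∑ j, P i j * D i j} =
      (1 / C : ℝ) * Finset.univ.inf' Finset.univ_nonempty
        (fun σ : Equiv.Perm (Fin C) => ∑ i, D i (σ i)) := by
  have : Nonempty (Fin C) := ⟨⟨0, hC⟩⟩
  have hCpos : (0:ℝ) < (C:ℝ) := by exact_mod_cast hC
  set m : ℝ := Finset.univ.inf' Finset.univ_nonempty
      (fun σ : Equiv.Perm (Fin C) => ∑ i, D i (σ i)) with hm
  set S := {x : ℝ | ∃ P : Fin C → Fin C → ℝ, (∀ i j, 0 ≤ P i j) ∧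
        (∀ i, ∑ j, P i j = 1 / C) ∧ (∀ j, ∑ i, P i j = 1 / C) ∧
        x = ∑ i, ∑ j, P i j * D i j} with hS
  -- lower bound
  have hlb : ∀ x ∈ S, (1 / C : ℝ) * m ≤ x := by
    rintro x ⟨P, hP0, hPr, hPc, rfl⟩
    set M : Matrix (Fin C) (Fin C) ℝ := fun i j => (C:ℝ) * P i j with hM
    have hMds : M ∈ doublyStochastic ℝ (Fin C) := by
      rw [mem_doublyStochastic_iff_sum]
      refine ⟨fun i j => mul_nonneg hCpos.le (hP0 i j), fun i => ?_, fun j => ?_⟩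
      · rw [← Finset.mul_sum, hPr i]; field_simp
      · rw [← Finset.mul_sum, hPc j]; field_simp
    obtain ⟨w, hw0, hw1, hwM⟩ := exists_eq_sum_perm_of_mem_doublyStochastic hMds
    have hPval : ∀ i j, P i j = (1/(C:ℝ)) * ∑ σ : Equiv.Perm (Fin C),
        w σ * (σ.permMatrix ℝ) i j := by
      intro i j
      have h1 : M i j = ∑ σ : Equiv.Perm (Fin C), w σ * (σ.permMatrix ℝ) i j := by
        rw [← hwM]
        simp only [Matrix.sum_apply, Matrix.smul_apply, smul_eq_mul]
      rw [hM] at h1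
      simp only at h1
      rw [← h1]
      field_simp
    have hobj : ∑ i, ∑ j, P i j * D i j
        = (1/(C:ℝ)) * ∑ σ : Equiv.Perm (Fin C), w σ * ∑ i, D i (σ i) := by
      have key : ∀ i j, P i j * D i j
          = (1/(C:ℝ)) * ∑ σ : Equiv.Perm (Fin C), w σ * ((σ.permMatrix ℝ) i j * D i j) := by
        intro i j
        simp only [hPval i j, Finset.mul_sum, Finset.sum_mul]
        exact Finset.sum_congr rfl fun σ _ => by ring
      simp only [key, ← Finset.mul_sum]
      congr 1
      rw [show (∑ i, ∑ j, ∑ σ : Equiv.Perm (Fin C),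
            w σ * ((σ.permMatrix ℝ) i j * D i j))
          = ∑ i, ∑ σ : Equiv.Perm (Fin C), ∑ j,
            w σ * ((σ.permMatrix ℝ) i j * D i j)
        from Finset.sum_congr rfl fun i _ => Finset.sum_comm, Finset.sum_comm]
      refine Finset.sum_congr rfl fun σ _ => ?_
      rw [Finset.mul_sum]
      refine Finset.sum_congr rfl fun i _ => ?_
      rw [← Finset.mul_sum, perm_row_obj D σ i]
    rw [hobj]
    gcongr
    calc m = (∑ σ : Equiv.Perm (Fin C), w σ) * m := by rw [hw1, one_mul]
    _ = ∑ σ : Equiv.Perm (Fin C), w σ * m := by rw [Finset.sum_mul]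
    _ ≤ ∑ σ : Equiv.Perm (Fin C), w σ * ∑ i, D i (σ i) := by
        refine Finset.sum_le_sum fun σ _ => ?_
        exact mul_le_mul_of_nonneg_left (Finset.inf'_le _ (Finset.mem_univ σ)) (hw0 σ)
  -- membership of the optimum
  obtain ⟨σ₀, -, hσ₀⟩ := Finset.exists_mem_eq_inf' (Finset.univ_nonempty)
      (fun σ : Equiv.Perm (Fin C) => ∑ i, D i (σ i))
  have hmem : (1 / C : ℝ) * m ∈ S := by
    refine ⟨fun i j => (1/(C:ℝ)) * (σ₀.permMatrix ℝ) i j, ?_, ?_, ?_, ?_⟩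
    · intro i j
      exact mul_nonneg (by positivity) (permMatrix_mem_doublyStochastic.1 i j)
    · intro i
      rw [← Finset.mul_sum, sum_row_of_mem_doublyStochastic permMatrix_mem_doublyStochastic,
        mul_one]
    · intro j
      rw [← Finset.mul_sum, sum_col_of_mem_doublyStochastic permMatrix_mem_doublyStochastic,
        mul_one]
    · show (1 / (C:ℝ)) * m = _
      rw [hm, hσ₀, Finset.mul_sum]
      refine Finset.sum_congr rfl fun i _ => ?_
      rw [← perm_row_obj D σ₀ i, Finset.mul_sum]
      refine Finset.sum_congr rfl fun j _ => ?_
      ring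
  exact le_antisymm (csInf_le ⟨_, hlb⟩ hmem) (le_csInf ⟨_, hmem⟩ hlb)
end
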